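/- The five functions I₀(h), h·I₀(h), h²·I₀(h), I₂(h), h·I₂(h) are linearly independent over ℝ as functions of h on the interval (0,∞), where I₀(h) = ∮_{H=h} y dx and I₂(h) = ∮_{H=h} x²y dx are the Abelian integrals over the ovals of H(x,y) = y²/2 + x²/2 + x⁴/4. -/
import Mathlib

/-- positive root in `x` of `x²/2 + x⁴/4 = h`, the endpoint of the oval `{H = h}`
of the global-center Hamiltonian `H = y²/2 + x²/2 + x⁴/4`. -/
noncomputable def a (h : ℝ) : ℝ := Real.sqrt (-1 + Real.sqrt (1 + 4*h))

lemma sqrt_ge_one {h : ℝ} (hh : 0 < h) : 1 ≤ Real.sqrt (1 + 4*h) := by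
  have := Real.sqrt_le_sqrt (show (1:ℝ) ≤ 1+4*h by linarith)
  simpa using this

lemma a_sq {h : ℝ} (hh : 0 < h) : (a h)^2 = -1 + Real.sqrt (1 + 4*h) := by
  rw [a, Real.sq_sqrt]
  linarith [sqrt_ge_one hh]

lemma a_pos {h : ℝ} (hh : 0 < h) : 0 < a h := by
  rw [a]
  apply Real.sqrt_pos.2
  have : Real.sqrt 1 < Real.sqrt (1 + 4*h) :=
    Real.sqrt_lt_sqrt (by norm_num) (by linarith)
  simp only [Real.sqrt_one] at this
  linarith

lemma a_key {h : ℝ} (hh : 0 < h) : (a h)^2 + (a h)^4/2 = 2*h := by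
  have h1 := a_sq hh
  have h2 : Real.sqrt (1+4*h) ^ 2 = 1 + 4*h := Real.sq_sqrt (by linarith)
  have h4 : (a h)^4 = ((a h)^2)^2 := by ring
  rw [h4, h1]
  nlinarith [h2]

lemma factor {h : ℝ} (hh : 0 < h) (x : ℝ) :
    2*h - x^2 - x^4/2 = ((a h)^2 - x^2) * (1 + ((a h)^2 + x^2)/2) := by
  linear_combination (-1 : ℝ) * (a_key hh)

/-- `I₀(h) = ∮_{H=h} y dx` -/
noncomputable def I₀ (h : ℝ) : ℝ :=
  2 * ∫ x in (-(a h))..(a h), Real.sqrt (2*h - x^2 - x^4/2)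

/-- `I₂(h) = ∮_{H=h} x²y dx` -/
noncomputable def I₂ (h : ℝ) : ℝ :=
  2 * ∫ x in (-(a h))..(a h), x^2 * Real.sqrt (2*h - x^2 - x^4/2)

lemma f_cont (h : ℝ) : Continuous (fun x : ℝ => Real.sqrt (2*h - x^2 - x^4/2)) := by
  exact Real.continuous_sqrt.comp (by continuity)

lemma f2_cont (h : ℝ) : Continuous (fun x : ℝ => x^2 * Real.sqrt (2*h - x^2 - x^4/2)) := by
  exact (continuous_pow 2).mul (f_cont h)

-- lower pointwise bound on the middle piece
lemma f_lower {h : ℝ} (hh : 0 < h) {x : ℝ} (hx1 : a h / 2 ≤ x) (hx2 : x ≤ 3 * a h / 4) :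
    (a h / 4) * Real.sqrt (1 + (a h)^2/2) ≤ Real.sqrt (2*h - x^2 - x^4/2) := by
  set A := a h with hA
  have hA0 : 0 < A := a_pos hh
  have hm : (A/4) * Real.sqrt (1 + A^2/2) = Real.sqrt ((A/4)^2 * (1 + A^2/2)) := by
    rw [Real.sqrt_mul (by positivity), Real.sqrt_sq (by positivity)]
  rw [hm]
  apply Real.sqrt_le_sqrt
  rw [factor hh x]
  have hx0 : 0 < x := lt_of_lt_of_le (by positivity) hx1
  have hxu : x^2 ≤ 9 * A^2 / 16 := by nlinarith
  have hxl : A^2/4 ≤ x^2 := by nlinarith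
  nlinarith [sq_nonneg A, sq_nonneg x]

lemma key_bounds {h : ℝ} (hh : 0 < h) :
    0 < I₀ h ∧ I₂ h ≤ (a h)^2 * I₀ h ∧ (a h)^2/128 * I₀ h ≤ I₂ h := by
  set A := a h with hA
  have hA0 : 0 < A := a_pos hh
  set f : ℝ → ℝ := fun x => Real.sqrt (2*h - x^2 - x^4/2) with hf
  have hfnn : ∀ x, 0 ≤ f x := fun x => Real.sqrt_nonneg _
  have hfi : ∀ c d : ℝ, IntervalIntegrable f MeasureTheory.volume c d :=
    fun c d => (f_cont h).intervalIntegrable c d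
  have hf2i : ∀ c d : ℝ, IntervalIntegrable (fun x => x^2 * f x) MeasureTheory.volume c d :=
    fun c d => (f2_cont h).intervalIntegrable c d
  set m : ℝ := (A/4) * Real.sqrt (1 + A^2/2) with hmdef
  have hm0 : 0 < m := by positivity
  -- lower bound for the middle integral of f
  have hmid : (A/4) * m ≤ ∫ x in (A/2)..(3*A/4), f x := by
    have : ∫ x in (A/2)..(3*A/4), m ≤ ∫ x in (A/2)..(3*A/4), f x := by
      apply intervalIntegral.integral_mono_on (by linarith)
        (intervalIntegrable_const) (hfi _ _)
      intro x hx
      exact f_lower hh hx.1 hx.2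
    rwa [intervalIntegral.integral_const, smul_eq_mul,
      show (3*A/4 - A/2) = A/4 by ring] at this
  -- middle ⊆ whole for f
  have hsub : (∫ x in (A/2)..(3*A/4), f x) ≤ ∫ x in (-A)..A, f x := by
    apply intervalIntegral.integral_mono_interval (by linarith) (by linarith) (by linarith)
      (Filter.Eventually.of_forall fun x => hfnn x) (hfi _ _)
  have hI0pos : 0 < I₀ h := by
    rw [I₀]
    have : 0 < (A/4) * m := by positivity
    nlinarith [hmid, hsub]
  refine ⟨hI0pos, ?_, ?_⟩
  · -- I₂ ≤ A² I₀
    rw [I₂, I₀]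
    have : (∫ x in (-A)..A, x^2 * f x) ≤ ∫ x in (-A)..A, A^2 * f x := by
      apply intervalIntegral.integral_mono_on (by linarith) (hf2i _ _)
        ((continuous_const.mul (f_cont h)).intervalIntegrable _ _)
      intro x hx
      have : x^2 ≤ A^2 := sq_le_sq' hx.1 hx.2
      exact mul_le_mul_of_nonneg_right this (hfnn x)
    rw [intervalIntegral.integral_const_mul] at this
    nlinarith
  · -- A²/128 * I₀ ≤ I₂
    -- upper bound on I₀ : ∫ f ≤ 2A √(2h) = 2A² √(1+A²/2)
    have hub : (∫ x in (-A)..A, f x) ≤ 2 * A^2 * Real.sqrt (1 + A^2/2) := by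
      have hb : ∀ x ∈ Set.uIoc (-A) A, ‖f x‖ ≤ Real.sqrt (2*h) := by
        intro x _
        rw [Real.norm_eq_abs, abs_of_nonneg (hfnn x)]
        apply Real.sqrt_le_sqrt
        nlinarith [sq_nonneg x, pow_le_pow_left₀ (sq_nonneg x) (le_refl (x^2)) 2]
      have := intervalIntegral.norm_integral_le_of_norm_le_const hb
      rw [Real.norm_eq_abs] at this
      have h2h : Real.sqrt (2*h) = A * Real.sqrt (1 + A^2/2) := by
        rw [show 2*h = A^2 * (1 + A^2/2) by linear_combination (-1:ℝ) * (a_key hh),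
          Real.sqrt_mul (by positivity), Real.sqrt_sq (by positivity)]
      have habs : |A - (-A)| = 2*A := by rw [abs_of_nonneg (by linarith)]; ring
      calc (∫ x in (-A)..A, f x) ≤ |∫ x in (-A)..A, f x| := le_abs_self _
        _ ≤ Real.sqrt (2*h) * |A - (-A)| := this
        _ = 2 * A^2 * Real.sqrt (1 + A^2/2) := by rw [h2h, habs]; ring
    -- lower bound on ∫ x² f : middle piece
    have hmid2 : (A^2/4) * ((A/4) * m) ≤ ∫ x in (A/2)..(3*A/4), x^2 * f x := by
      have : ∫ x in (A/2)..(3*A/4), (A^2/4) * m ≤ ∫ x in (A/2)..(3*A/4), x^2 * f x := by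
        apply intervalIntegral.integral_mono_on (by linarith)
          (intervalIntegrable_const) (hf2i _ _)
        intro x hx
        have hx0 : 0 < x := lt_of_lt_of_le (by positivity) hx.1
        have hxl : A^2/4 ≤ x^2 := by nlinarith [hx.1]
        have := f_lower hh hx.1 hx.2
        calc (A^2/4) * m ≤ x^2 * m := by nlinarith
          _ ≤ x^2 * f x := by
              apply mul_le_mul_of_nonneg_left _ (sq_nonneg x)
              exact this
      rw [intervalIntegral.integral_const, smul_eq_mul,
        show (3*A/4 - A/2) = A/4 by ring] at this
      have e : (A^2/4) * ((A/4)*m) = (A/4) * (A^2/4 * m) := by ring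
      rw [e]; exact this
    have hsub2 : (∫ x in (A/2)..(3*A/4), x^2 * f x) ≤ ∫ x in (-A)..A, x^2 * f x := by
      apply intervalIntegral.integral_mono_interval (by linarith) (by linarith) (by linarith)
        (Filter.Eventually.of_forall fun x => mul_nonneg (sq_nonneg x) (hfnn x)) (hf2i _ _)
    rw [I₂, I₀]
    -- I₂ ≥ 2 * (A²/4)*(A/4)*m = A⁴/32 √(1+A²/2);  A²/128 * I₀ ≤ A²/128 * 4A²√ = A⁴/32 √
    have hs : 0 ≤ Real.sqrt (1 + A^2/2) := Real.sqrt_nonneg _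
    have hmexp : (A^2/4) * ((A/4) * m) = A^4/64 * Real.sqrt (1 + A^2/2) := by
      rw [hmdef]; ring
    nlinarith [hmid2, hsub2, hub, sq_nonneg A, mul_le_mul_of_nonneg_left hub (by positivity : (0:ℝ) ≤ A^2/128)]

lemma a_sq_bounds {t : ℝ} (ht : 1 ≤ t) : t ≤ (a (t^2))^2 ∧ (a (t^2))^2 ≤ 2*t := by
  have ht0 : 0 < t := by linarith
  have h2 : (0:ℝ) < t^2 := by positivity
  rw [a_sq h2]
  constructor
  · have : (1 + t) ≤ Real.sqrt (1 + 4*t^2) := by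
      rw [show (1 + 4*t^2 : ℝ) = (1+t)^2 + (3*t^2 - 2*t) by ring]
      have : (1+t) = Real.sqrt ((1+t)^2) := (Real.sqrt_sq (by linarith)).symm
      nth_rewrite 1 [this]
      apply Real.sqrt_le_sqrt
      nlinarith
    linarith
  · have : Real.sqrt (1 + 4*t^2) ≤ 1 + 2*t := by
      rw [show (1 + 2*t : ℝ) = Real.sqrt ((1+2*t)^2) from (Real.sqrt_sq (by linarith)).symm]
      apply Real.sqrt_le_sqrt
      nlinarith
    linarith

lemma key_E (c₀ c₁ c₂ c₃ c₄ : ℝ)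
    (hvan : ∀ h : ℝ, 0 < h →
      c₀ * I₀ h + c₁ * (h * I₀ h) + c₂ * (h^2 * I₀ h) + c₃ * I₂ h + c₄ * (h * I₂ h) = 0)
    {t : ℝ} (ht : 1 ≤ t) :
    ∃ E : ℝ, t/128 ≤ E ∧ E ≤ 2*t ∧
      c₀ + c₁*t^2 + c₂*(t^2)^2 + (c₃ + c₄*t^2)*E = 0 := by
  have ht0 : 0 < t := by linarith
  have h2 : (0:ℝ) < t^2 := by positivity
  obtain ⟨hI0, hIu, hIl⟩ := key_bounds h2
  obtain ⟨hal, hau⟩ := a_sq_bounds ht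
  refine ⟨I₂ (t^2) / I₀ (t^2), ?_, ?_, ?_⟩
  · rw [le_div_iff₀ hI0]
    calc t/128 * I₀ (t^2) ≤ (a (t^2))^2/128 * I₀ (t^2) := by nlinarith
      _ ≤ I₂ (t^2) := hIl
  · rw [div_le_iff₀ hI0]
    calc I₂ (t^2) ≤ (a (t^2))^2 * I₀ (t^2) := hIu
      _ ≤ 2*t * I₀ (t^2) := by nlinarith
  · have hv := hvan (t^2) h2
    field_simp
    linear_combination hv

lemma pick_t {c S : ℝ} (hc : 0 < c) (hS : 0 ≤ S) : ∃ t : ℝ, 1 ≤ t ∧ c * t = S + c := by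
  refine ⟨S/c + 1, ?_, ?_⟩
  · have := div_nonneg hS hc.le; linarith
  · field_simp

/-- The five functions `I₀, h·I₀, h²·I₀, I₂, h·I₂` are linearly independent over ℝ
on `(0, ∞)`. -/
theorem linear_independence (c₀ c₁ c₂ c₃ c₄ : ℝ)
    (hvan : ∀ h : ℝ, 0 < h →
      c₀ * I₀ h + c₁ * (h * I₀ h) + c₂ * (h^2 * I₀ h) + c₃ * I₂ h + c₄ * (h * I₂ h) = 0) :
    c₀ = 0 ∧ c₁ = 0 ∧ c₂ = 0 ∧ c₃ = 0 ∧ c₄ = 0 := by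
  have key := fun {t : ℝ} (ht : 1 ≤ t) => key_E c₀ c₁ c₂ c₃ c₄ hvan ht
  -- Step 1 : c₂ = 0
  have hc2 : c₂ = 0 := by
    by_contra hc
    have hcpos : 0 < |c₂| := abs_pos.2 hc
    obtain ⟨t, ht, htc⟩ := pick_t hcpos
      (by positivity : (0:ℝ) ≤ |c₀| + |c₁| + 2 * |c₃| + 2 * |c₄|)
    obtain ⟨E, hE1, hE2, heq⟩ := key ht
    have ht0 : 0 < t := by linarith
    have hE0 : 0 ≤ E := le_trans (by positivity) hE1
    have h1 : c₂ * (t^2)^2 = -(c₀ + c₁*t^2 + (c₃ + c₄*t^2)*E) := by linarith [heq]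
    have h2 : |c₂| * t^4 = |c₀ + c₁*t^2 + (c₃ + c₄*t^2)*E| := by
      rw [show |c₂| * t^4 = |c₂ * (t^2)^2| by
        rw [abs_mul, abs_of_nonneg (by positivity : (0:ℝ) ≤ (t^2)^2)]; ring, h1, abs_neg]
    have b1 : |c₀ + c₁*t^2 + (c₃ + c₄*t^2)*E| ≤ |c₀| + |c₁| * t^2 + (|c₃| + |c₄| * t^2)*E := by
      have a1 := abs_add_le (c₀ + c₁*t^2) ((c₃+c₄*t^2)*E)
      have a2 := abs_add_le c₀ (c₁*t^2)
      have a3 := abs_add_le c₃ (c₄*t^2)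
      have e1 : |c₁*t^2| = |c₁| * t^2 := by rw [abs_mul, abs_of_nonneg (sq_nonneg t)]
      have e2 : |(c₃+c₄*t^2)*E| = |c₃+c₄*t^2| * E := by rw [abs_mul, abs_of_nonneg hE0]
      have e3 : |c₄*t^2| = |c₄| * t^2 := by rw [abs_mul, abs_of_nonneg (sq_nonneg t)]
      have e4 : |c₃+c₄*t^2| * E ≤ (|c₃| + |c₄| * t^2)*E := by
        apply mul_le_mul_of_nonneg_right _ hE0
        rw [← e3]; exact a3
      linarith
    have habs : |c₂| * t^4 ≤ |c₀| + |c₁| * t^2 + (|c₃| + |c₄| * t^2)*E := h2 ▸ b1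
    have hE2' : (|c₃| + |c₄| * t^2)*E ≤ (|c₃| + |c₄| * t^2)*(2*t) :=
      mul_le_mul_of_nonneg_left hE2 (by positivity)
    have hq : |c₂| * t^4 = |c₀| * t^3 + |c₁| * t^3 + 2 * |c₃| * t^3 + 2 * |c₄| * t^3
        + |c₂| * t^3 := by
      linear_combination t^3 * htc
    have ht3 : (1:ℝ) ≤ t^3 := by nlinarith
    have htt : t^2 ≤ t^3 := by nlinarith
    have htt1 : t ≤ t^3 := by nlinarith
    have p0 : |c₀| ≤ |c₀| * t^3 := le_mul_of_one_le_right (abs_nonneg _) ht3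
    have p1 : |c₁| * t^2 ≤ |c₁| * t^3 := mul_le_mul_of_nonneg_left htt (abs_nonneg _)
    have p3 : |c₃| * t ≤ |c₃| * t^3 := mul_le_mul_of_nonneg_left htt1 (abs_nonneg _)
    have p2 : |c₂| ≤ |c₂| * t^3 := le_mul_of_one_le_right hcpos.le ht3
    have hexp : (|c₃| + |c₄| * t^2) * (2*t) = 2 * |c₃| * t + 2 * |c₄| * t^3 := by ring
    linarith [habs, hE2', hq, p0, p1, p3, p2, hcpos, hexp]
  -- Step 2 : c₄ = 0
  have hc4 : c₄ = 0 := by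
    by_contra hc
    have hcpos : 0 < |c₄| := abs_pos.2 hc
    obtain ⟨t, ht, htc⟩ := pick_t hcpos
      (by positivity : (0:ℝ) ≤ 128 * |c₀| + 128 * |c₁| + |c₃|)
    obtain ⟨E, hE1, hE2, heq⟩ := key ht
    have ht0 : 0 < t := by linarith
    have hE0 : 0 ≤ E := le_trans (by positivity) hE1
    have h1 : (c₃ + c₄*t^2)*E = -(c₀ + c₁*t^2) := by
      rw [hc2] at heq; linarith [heq]
    have h2 : |c₃ + c₄*t^2| * E = |c₀ + c₁*t^2| := by
      rw [show |c₃ + c₄*t^2| * E = |(c₃ + c₄*t^2) * E| by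
        rw [abs_mul, abs_of_nonneg hE0], h1, abs_neg]
    have b1 : |c₀ + c₁*t^2| ≤ |c₀| + |c₁| * t^2 := by
      have := abs_add_le c₀ (c₁*t^2)
      have e1 : |c₁*t^2| = |c₁| * t^2 := by rw [abs_mul, abs_of_nonneg (sq_nonneg t)]
      linarith
    have b2 : |c₄| * t^2 - |c₃| ≤ |c₃ + c₄*t^2| := by
      have := abs_add_le (c₃ + c₄*t^2) (-c₃)
      have e1 : |c₄*t^2| = |c₄| * t^2 := by rw [abs_mul, abs_of_nonneg (sq_nonneg t)]
      simp only [abs_neg] at this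
      have e2 : c₃ + c₄*t^2 + -c₃ = c₄*t^2 := by ring
      rw [e2, e1] at this
      linarith
    have ht2 : (1:ℝ) ≤ t^2 := by nlinarith
    have hfac : 0 ≤ |c₄| * t^2 - |c₃| := by
      have : |c₄| * t ≤ |c₄| * t^2 := mul_le_mul_of_nonneg_left (by nlinarith) (abs_nonneg _)
      have h0 : (0:ℝ) ≤ 128 * |c₀| + 128 * |c₁| := by positivity
      linarith [htc]
    have b3 : (|c₄| * t^2 - |c₃|) * (t/128) ≤ |c₀| + |c₁| * t^2 := by
      calc (|c₄| * t^2 - |c₃|) * (t/128) ≤ (|c₄| * t^2 - |c₃|) * E :=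
            mul_le_mul_of_nonneg_left hE1 hfac
        _ ≤ |c₃ + c₄*t^2| * E := mul_le_mul_of_nonneg_right b2 hE0
        _ = |c₀ + c₁*t^2| := h2
        _ ≤ |c₀| + |c₁| * t^2 := b1
    have b3' : |c₄| * t^3 - |c₃| * t ≤ 128 * |c₀| + 128 * |c₁| * t^2 := by
      nlinarith [b3]
    have hq : |c₄| * t^3 = 128 * |c₀| * t^2 + 128 * |c₁| * t^2 + |c₃| * t^2 + |c₄| * t^2 := by
      linear_combination t^2 * htc
    have q0 : 128 * |c₀| ≤ 128 * |c₀| * t^2 := by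
      nlinarith [le_mul_of_one_le_right (abs_nonneg c₀) ht2]
    have q3 : |c₃| * t ≤ |c₃| * t^2 :=
      mul_le_mul_of_nonneg_left (by nlinarith : t ≤ t^2) (abs_nonneg _)
    have q4 : |c₄| ≤ |c₄| * t^2 := le_mul_of_one_le_right hcpos.le ht2
    linarith [b3', hq, q0, q3, q4, hcpos]
  -- Step 3 : c₁ = 0
  have hc1 : c₁ = 0 := by
    by_contra hc
    have hcpos : 0 < |c₁| := abs_pos.2 hc
    obtain ⟨t, ht, htc⟩ := pick_t hcpos (by positivity : (0:ℝ) ≤ |c₀| + 2 * |c₃|)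
    obtain ⟨E, hE1, hE2, heq⟩ := key ht
    have ht0 : 0 < t := by linarith
    have hE0 : 0 ≤ E := le_trans (by positivity) hE1
    have h1 : c₁*t^2 = -(c₀ + c₃*E) := by
      rw [hc2, hc4] at heq; linarith [heq]
    have h2 : |c₁| * t^2 = |c₀ + c₃*E| := by
      rw [show |c₁| * t^2 = |c₁ * t^2| by
        rw [abs_mul, abs_of_nonneg (sq_nonneg t)], h1, abs_neg]
    have b1 : |c₀ + c₃*E| ≤ |c₀| + |c₃| * E := by
      have := abs_add_le c₀ (c₃*E)
      have e1 : |c₃*E| = |c₃| * E := by rw [abs_mul, abs_of_nonneg hE0]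
      linarith
    have b2 : |c₃| * E ≤ |c₃| * (2*t) := mul_le_mul_of_nonneg_left hE2 (abs_nonneg _)
    have hq : |c₁| * t^2 = |c₀| * t + 2 * |c₃| * t + |c₁| * t := by
      linear_combination t * htc
    have r0 : |c₀| ≤ |c₀| * t := le_mul_of_one_le_right (abs_nonneg _) ht
    have r1 : |c₁| ≤ |c₁| * t := le_mul_of_one_le_right hcpos.le ht
    linarith [h2, b1, b2, hq, r0, r1, hcpos]
  -- Step 4 : c₃ = 0
  have hc3 : c₃ = 0 := by
    by_contra hc
    have hcpos : 0 < |c₃| := abs_pos.2 hc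
    obtain ⟨t, ht, htc⟩ := pick_t hcpos (by positivity : (0:ℝ) ≤ 128 * |c₀|)
    obtain ⟨E, hE1, hE2, heq⟩ := key ht
    have ht0 : 0 < t := by linarith
    have hE0 : 0 ≤ E := le_trans (by positivity) hE1
    have h1 : c₃*E = -c₀ := by
      rw [hc2, hc4, hc1] at heq; linarith [heq]
    have h2 : |c₃| * E = |c₀| := by
      rw [show |c₃| * E = |c₃ * E| by rw [abs_mul, abs_of_nonneg hE0], h1, abs_neg]
    have b1 : |c₃| * (t/128) ≤ |c₃| * E := mul_le_mul_of_nonneg_left hE1 (abs_nonneg _)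
    linarith [h2, b1, htc, hcpos]
  -- Step 5 : c₀ = 0
  have hc0 : c₀ = 0 := by
    obtain ⟨E, _, _, heq⟩ := key le_rfl
    rw [hc1, hc2, hc3, hc4] at heq
    linarith [heq]
  exact ⟨hc0, hc1, hc2, hc3, hc4⟩
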